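/- For u with a↓_{k+1} < u ≤ a↓_k, the smallest l satisfying g_r(u, l) = 0 equals a↓_{k+1}, i.e., G_r(u) = a↓_{k+1} on (a↓_{k+1}, a↓_k]. -/

import Mathlib

/-!
Write `φ(t) = ∑ᵢ max (aᵢ - t) 0`, so that `g_r(u, l) = (φ u + k u) - (φ l + k l)`. With `b = a↓`,
as long as `t` separates the `k` largest entries from the others, `φ t = ∑_{i<k} (bᵢ - t)`; both
`u` and `b_k` are such points, so `g_r(u, b_k) = 0`. For `l < b_k` the `k + 1` largest entries all
exceed `l`, so `φ l ≥ ∑_{i≤k} (bᵢ - l)`, which makes `g_r(u, l) ≤ -(b_k - l) < 0`.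
-/

open Finset

/-- The entries of `a` rearranged in nonincreasing order. -/
noncomputable def sortDesc (n : ℕ) (a : Fin n → ℝ) : Fin n → ℝ :=
  fun i => a (Tuple.sort a i.rev)

/-- The sum of the `k` largest entries of `a`. -/
noncomputable def topKSum (n k : ℕ) (a : Fin n → ℝ) : ℝ :=
  ∑ i : Fin n, if (i : ℕ) < k then sortDesc n a i else 0
/-- The relaxed function `g_r(u, l)`. -/
noncomputable def grfun (n k : ℕ) (a : Fin n → ℝ) (u l : ℝ) : ℝ :=
  (∑ i : Fin n, max (a i - u) 0) - (∑ i : Fin n, max (a i - l) 0) + k * (u - l)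

section PositivePart

variable {ι : Type*} [Fintype ι] (f : ι → ℝ) (s : Finset ι) (t : ℝ)

theorem sum_sub_card_mul_le_sum_max_sub_zero : ∑ i ∈ s, f i - #s * t ≤ ∑ i, max (f i - t) 0 := by
  rw [← nsmul_eq_mul, ← sum_const, ← sum_sub_distrib]
  exact (sum_le_sum fun i _ => le_max_left _ _).trans
    (sum_le_sum_of_subset_of_nonneg (subset_univ s) fun _ _ _ => le_max_right _ _)

theorem sum_max_sub_zero_eq_sum_sub_card_mul (hs : ∀ i ∈ s, t ≤ f i) (hsc : ∀ i ∉ s, f i ≤ t) :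
    ∑ i, max (f i - t) 0 = ∑ i ∈ s, f i - #s * t := by
  rw [← nsmul_eq_mul, ← sum_const, ← sum_sub_distrib,
    ← sum_subset (subset_univ s) fun i _ hi => max_eq_right (sub_nonpos.2 (hsc i hi))]
  exact sum_congr rfl fun i hi => max_eq_left (sub_nonneg.2 (hs i hi))

end PositivePart

theorem sortDesc_antitone (n : ℕ) (a : Fin n → ℝ) : Antitone (sortDesc n a) :=
  fun _ _ hij => Tuple.monotone_sort a (Fin.rev_le_rev.2 hij)

theorem sum_sortDesc (n : ℕ) (a : Fin n → ℝ) (f : ℝ → ℝ) :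
    ∑ i, f (sortDesc n a i) = ∑ i, f (a i) :=
  Equiv.sum_comp (Fin.revPerm.trans (Tuple.sort a)) (fun i => f (a i))

theorem grfun_eq_sortDesc (n k : ℕ) (a : Fin n → ℝ) (u l : ℝ) :
    grfun n k a u l = (∑ i, max (sortDesc n a i - u) 0) - (∑ i, max (sortDesc n a i - l) 0)
      + k * (u - l) := by
  rw [grfun, sum_sortDesc n a (fun x => max (x - u) 0), sum_sortDesc n a (fun x => max (x - l) 0)]

/-- On `(a↓_{k+1}, a↓_k]`, the smallest root of `g_r(u, ·)` is `a↓_{k+1}`, i.e.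
`G_r(u) = a↓_{k+1}`. -/
theorem stmt12 (n k : ℕ) (hk : k < n) (a : Fin n → ℝ)
    (u : ℝ) (hu1 : sortDesc n a ⟨k, hk⟩ < u) (hu2 : u ≤ sortDesc n a ⟨k - 1, by omega⟩) :
    IsLeast {l : ℝ | grfun n k a u l = 0} (sortDesc n a ⟨k, hk⟩) := by
  set b := sortDesc n a
  set K : Fin n := ⟨k, hk⟩
  have hlarge : ∀ i ∈ Iio K, u ≤ b i := fun i hi => by
    have hik : (i : ℕ) ≤ k - 1 := by simp [K, Fin.lt_def] at hi; omega
    exact hu2.trans (sortDesc_antitone n a (Fin.le_def.2 hik))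
  have hsmall : ∀ i ∉ Iio K, b i ≤ b K := fun i hi =>
    sortDesc_antitone n a (by simpa using hi)
  have hφu := sum_max_sub_zero_eq_sum_sub_card_mul b (Iio K) u hlarge
    fun i hi => (hsmall i hi).trans hu1.le
  have hφK := sum_max_sub_zero_eq_sum_sub_card_mul b (Iio K) (b K)
    (fun i hi => hu1.le.trans (hlarge i hi)) hsmall
  rw [Fin.card_Iio] at hφu hφK
  refine ⟨?_, fun l hl => ?_⟩
  · rw [Set.mem_ofPred_eq, grfun_eq_sortDesc, hφu, hφK]
    ring
  · by_contra! hlt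
    have hφl : b K + ∑ i ∈ Iio K, b i - (k + 1) * l ≤ ∑ i, max (b i - l) 0 := by
      simpa [← Iio_insert] using sum_sub_card_mul_le_sum_max_sub_zero b (Iic K) l
    have hneg : grfun n k a u l < 0 := by
      rw [grfun_eq_sortDesc, hφu]
      linarith
    exact hneg.ne hl
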